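/- For every term t and proposition A of the binding-logic language L and every variable x, the pre-cooking of the capture-avoiding substitution satisfies ((t/x)A)' ≡ (t'/x)A' modulo the congruence generated by σ. -/

import Mathlib

/- ## Binding logic: syntax and sequent calculus -/

/-- A binding-logic language: function and predicate symbols with binding arities. -/
structure BSig where
  Fn : Type
  Pr : Type
  /-- binding arity of a function symbol -/
  far : Fn → List ℕ
  /-- binding arity of a predicate symbol -/
  par : Pr → List ℕ

/-- Terms of binding logic (α-equivalence classes, in locally nameless / de Bruijn style):
`bvar i` is a variable bound by a binder of a function symbol or by a quantifier,
`fvar x` is a named free variable.  In `app f a`, the `i`-th argument `a i` is a term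
in which `(S.far f).get i` additional variables (de Bruijn indices `0, …, kᵢ - 1`) are bound. -/
inductive Tm (S : BSig) : Type
  | bvar : ℕ → Tm S
  | fvar : ℕ → Tm S
  | app : (f : S.Fn) → (Fin (S.far f).length → Tm S) → Tm S

variable {S : BSig}

/-- `Tm.WF p t`: all de Bruijn variables of `t` are bound among the `p` ambient binders;
a *term of the language* (over named free variables) at binder depth `p`. -/
def Tm.WF : ℕ → Tm S → Prop
  | p, .bvar i => i < p
  | _, .fvar _ => True
  | p, .app f a => ∀ i, Tm.WF (p + (S.far f).get i) (a i)

/-- Capture-avoiding substitution of the term `u` for the free variable `x`. -/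
def Tm.subst (x : ℕ) (u : Tm S) : Tm S → Tm S
  | .bvar i => .bvar i
  | .fvar y => if y = x then u else .fvar y
  | .app f a => .app f (fun i => Tm.subst x u (a i))

/-- Instantiation of the bound variable `k` by the (locally closed) term `u`. -/
def Tm.openT (u : Tm S) : ℕ → Tm S → Tm S
  | k, .bvar i => if i = k then u else .bvar i
  | _, .fvar y => .fvar y
  | k, .app f a => .app f (fun i => Tm.openT u (k + (S.far f).get i) (a i))

/-- Free (named) variables of a term. -/
def Tm.fv : Tm S → Set ℕ
  | .bvar _ => ∅
  | .fvar x => {x}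
  | .app _ a => ⋃ i, (a i).fv

/-- Propositions of binding logic.  In `atom P a`, the `i`-th argument binds
`(S.par P).get i` variables; quantifiers bind one de Bruijn variable. -/
inductive Fm (S : BSig) : Type
  | atom : (P : S.Pr) → (Fin (S.par P).length → Tm S) → Fm S
  | imp : Fm S → Fm S → Fm S
  | conj : Fm S → Fm S → Fm S
  | disj : Fm S → Fm S → Fm S
  | bot : Fm S
  | all : Fm S → Fm S
  | ex : Fm S → Fm S

/-- `Fm.WF q A`: well-formedness of `A` under `q` ambient quantifiers. -/
def Fm.WF : ℕ → Fm S → Prop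
  | q, .atom P a => ∀ i, Tm.WF (q + (S.par P).get i) (a i)
  | q, .imp A B => Fm.WF q A ∧ Fm.WF q B
  | q, .conj A B => Fm.WF q A ∧ Fm.WF q B
  | q, .disj A B => Fm.WF q A ∧ Fm.WF q B
  | _, .bot => True
  | q, .all A => Fm.WF (q + 1) A
  | q, .ex A => Fm.WF (q + 1) A

/-- Free (named) variables of a proposition. -/
def Fm.fv : Fm S → Set ℕ
  | .atom _ a => ⋃ i, (a i).fv
  | .imp A B => A.fv ∪ B.fv
  | .conj A B => A.fv ∪ B.fv
  | .disj A B => A.fv ∪ B.fv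
  | .bot => ∅
  | .all A => A.fv
  | .ex A => A.fv

/-- Instantiation of the quantifier-bound variable `k` of a proposition by a term. -/
def Fm.openF (u : Tm S) : ℕ → Fm S → Fm S
  | k, .atom P a => .atom P (fun i => Tm.openT u (k + (S.par P).get i) (a i))
  | k, .imp A B => .imp (Fm.openF u k A) (Fm.openF u k B)
  | k, .conj A B => .conj (Fm.openF u k A) (Fm.openF u k B)
  | k, .disj A B => .disj (Fm.openF u k A) (Fm.openF u k B)
  | _, .bot => .bot
  | k, .all A => .all (Fm.openF u (k + 1) A)
  | k, .ex A => .ex (Fm.openF u (k + 1) A)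

/-- Capture-avoiding substitution of a term for a free variable in a proposition. -/
def Fm.subst (x : ℕ) (u : Tm S) : Fm S → Fm S
  | .atom P a => .atom P (fun i => Tm.subst x u (a i))
  | .imp A B => .imp (Fm.subst x u A) (Fm.subst x u B)
  | .conj A B => .conj (Fm.subst x u A) (Fm.subst x u B)
  | .disj A B => .disj (Fm.subst x u A) (Fm.subst x u B)
  | .bot => .bot
  | .all A => .all (Fm.subst x u A)
  | .ex A => .ex (Fm.subst x u A)

/-- Free variables of a multiset of propositions. -/
def mFv (Γ : Multiset (Fm S)) : Set ℕ := {x | ∃ A ∈ Γ, x ∈ A.fv}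

/-- The sequent calculus of binding logic: exactly the standard rules of classical
sequent calculus, with capture-avoiding substitution in the quantifier rules. -/
inductive Deriv (S : BSig) : Multiset (Fm S) → Multiset (Fm S) → Prop
  | ax (A : Fm S) : Deriv S {A} {A}
  | cut {Γ Δ : Multiset (Fm S)} {A : Fm S} :
      Deriv S (A ::ₘ Γ) Δ → Deriv S Γ (A ::ₘ Δ) → Deriv S Γ Δ
  | contrL {Γ Δ} {A : Fm S} : Deriv S (A ::ₘ A ::ₘ Γ) Δ → Deriv S (A ::ₘ Γ) Δ
  | contrR {Γ Δ} {A : Fm S} : Deriv S Γ (A ::ₘ A ::ₘ Δ) → Deriv S Γ (A ::ₘ Δ)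
  | weakL {Γ Δ} {A : Fm S} : Deriv S Γ Δ → Deriv S (A ::ₘ Γ) Δ
  | weakR {Γ Δ} {A : Fm S} : Deriv S Γ Δ → Deriv S Γ (A ::ₘ Δ)
  | impL {Γ Δ} {A B : Fm S} :
      Deriv S Γ (A ::ₘ Δ) → Deriv S (B ::ₘ Γ) Δ → Deriv S ((Fm.imp A B) ::ₘ Γ) Δ
  | impR {Γ Δ} {A B : Fm S} :
      Deriv S (A ::ₘ Γ) (B ::ₘ Δ) → Deriv S Γ ((Fm.imp A B) ::ₘ Δ)
  | conjL {Γ Δ} {A B : Fm S} :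
      Deriv S (A ::ₘ B ::ₘ Γ) Δ → Deriv S ((Fm.conj A B) ::ₘ Γ) Δ
  | conjR {Γ Δ} {A B : Fm S} :
      Deriv S Γ (A ::ₘ Δ) → Deriv S Γ (B ::ₘ Δ) → Deriv S Γ ((Fm.conj A B) ::ₘ Δ)
  | disjL {Γ Δ} {A B : Fm S} :
      Deriv S (A ::ₘ Γ) Δ → Deriv S (B ::ₘ Γ) Δ → Deriv S ((Fm.disj A B) ::ₘ Γ) Δ
  | disjR {Γ Δ} {A B : Fm S} :
      Deriv S Γ (A ::ₘ B ::ₘ Δ) → Deriv S Γ ((Fm.disj A B) ::ₘ Δ)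
  | botL {Γ Δ} : Deriv S ((Fm.bot) ::ₘ Γ) Δ
  | allL {Γ Δ} {A : Fm S} {t : Tm S} : Tm.WF 0 t →
      Deriv S ((Fm.openF t 0 A) ::ₘ Γ) Δ → Deriv S ((Fm.all A) ::ₘ Γ) Δ
  | allR {Γ Δ} {A : Fm S} {x : ℕ} :
      x ∉ mFv Γ → x ∉ mFv Δ → x ∉ A.fv →
      Deriv S Γ ((Fm.openF (Tm.fvar x) 0 A) ::ₘ Δ) → Deriv S Γ ((Fm.all A) ::ₘ Δ)
  | exL {Γ Δ} {A : Fm S} {x : ℕ} :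
      x ∉ mFv Γ → x ∉ mFv Δ → x ∉ A.fv →
      Deriv S ((Fm.openF (Tm.fvar x) 0 A) ::ₘ Γ) Δ → Deriv S ((Fm.ex A) ::ₘ Γ) Δ
  | exR {Γ Δ} {A : Fm S} {t : Tm S} : Tm.WF 0 t →
      Deriv S Γ ((Fm.openF t 0 A) ::ₘ Δ) → Deriv S Γ ((Fm.ex A) ::ₘ Δ)
/- ## The translated language L' : explicit substitutions and de Bruijn indices -/

/-- Sorts of `L'`: `tm n` for terms in a context of `n` bound variables, and
`sb n p` for explicit substitutions mapping `p` variables to terms of sort `n`. -/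
inductive Srt : Type
  | tm : ℕ → Srt
  | sb : ℕ → ℕ → Srt
deriving DecidableEq

/-- Terms of `L'`.  `evar x s` is a named variable of sort `s`; `qvar i` is a
(formula-level) de Bruijn variable bound by a quantifier; `idx i n` is the de Bruijn
constant `iₙ` (`1 ≤ i ≤ n`); `fa f p a` is `fₚ(a)`; `sub t s` is `t[s]`;
`eid n`, `cons`, `up n`, `comp` are `idₙ`, cons `.`, `↑ₙ` and composition `∘`. -/
inductive ETm (S : BSig) : Type
  | evar : ℕ → Srt → ETm S
  | qvar : ℕ → ETm S
  | idx : ℕ → ℕ → ETm S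
  | fa : (f : S.Fn) → ℕ → (Fin (S.far f).length → ETm S) → ETm S
  | sub : ETm S → ETm S → ETm S
  | eid : ℕ → ETm S
  | cons : ETm S → ETm S → ETm S
  | up : ℕ → ETm S
  | comp : ETm S → ETm S → ETm S

variable {S : BSig}

/-- The iterated shift `↑^k` out of context `p`:
`↑_p ∘ (↑_{p+1} ∘ ⋯ ∘ ↑_{p+k-1})`, of sort `⟨p+k, p⟩` (`id_p` for `k = 0`). -/
def upChain (S : BSig) (p : ℕ) : ℕ → ETm S
  | 0 => .eid p
  | 1 => .up p
  | k + 2 => .comp (.up p) (upChain S (p + 1) (k + 1))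

/-- Sorting judgment for `L'`; `Θ` gives the sorts of the quantifier-bound variables. -/
inductive HasSort : List Srt → ETm S → Srt → Prop
  | evar {Θ x s} : HasSort Θ (.evar x s) s
  | qvar {Θ i s} : Θ[i]? = some s → HasSort Θ (.qvar i) s
  | idx {Θ i n} : 1 ≤ i → i ≤ n → HasSort Θ (.idx i n) (.tm n)
  | fa {Θ} {f : S.Fn} {p : ℕ} {a : Fin (S.far f).length → ETm S} :
      (∀ j, HasSort Θ (a j) (.tm (p + (S.far f).get j))) →
      HasSort Θ (.fa f p a) (.tm p)
  | sub {Θ t s n p} : HasSort Θ t (.tm p) → HasSort Θ s (.sb n p) →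
      HasSort Θ (.sub t s) (.tm n)
  | eid {Θ n} : HasSort Θ (.eid n) (.sb n n)
  | cons {Θ t s n p} : HasSort Θ t (.tm n) → HasSort Θ s (.sb n p) →
      HasSort Θ (.cons t s) (.sb n (p + 1))
  | up {Θ n} : HasSort Θ (.up n) (.sb (n + 1) n)
  | comp {Θ s₁ s₂ n p q} : HasSort Θ s₁ (.sb p n) → HasSort Θ s₂ (.sb q p) →
      HasSort Θ (.comp s₁ s₂) (.sb q n)

/-- The component `1[↑^j]` (of sort `q+k`, with `1` of sort `q+k-j`). -/
def shiftOne (S : BSig) (q k j : ℕ) : ETm S :=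
  if j = 0 then .idx 1 (q + k) else .sub (.idx 1 (q + k - j)) (upChain S (q + k - j) j)

/-- Auxiliary: builds `1[↑^j]. … .1[↑^{k-1}].(s ∘ ↑^k)`. -/
def liftAux (S : BSig) (q k : ℕ) (s : ETm S) : ℕ → ℕ → ETm S
  | 0, _ => .comp s (upChain S q k)
  | m + 1, j => .cons (shiftOne S q k j) (liftAux S q k s m (j + 1))

/-- The substitution `1.1[↑].….1[↑^{k−1}].(s ∘ ↑^k)` of sort `⟨q+k, p+k⟩`,
for `s` of sort `⟨q,p⟩` (just `s` when `k = 0`). -/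
def liftSub (S : BSig) (q k : ℕ) (s : ETm S) : ETm S :=
  match k with
  | 0 => s
  | k' + 1 => liftAux S q (k' + 1) s (k' + 1) 0

/-- One step of `σ`-rewriting (at the root or in any subterm). -/
inductive Rw : ETm S → ETm S → Prop
  -- the rule n+1 → 1[↑ⁿ]
  | ridx {i n : ℕ} : 1 ≤ i → i + 1 ≤ n →
      Rw (.idx (i + 1) n) (.sub (.idx 1 (n - i)) (upChain S (n - i) i))
  -- 1[t.s] → t
  | rhead {m : ℕ} {t s : ETm S} : Rw (.sub (.idx 1 m) (.cons t s)) t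
  -- t[id] → t
  | rtid {n : ℕ} {t : ETm S} : Rw (.sub t (.eid n)) t
  -- (t[s])[s'] → t[s ∘ s']
  | rclos {t s s' : ETm S} : Rw (.sub (.sub t s) s') (.sub t (.comp s s'))
  -- id ∘ s → s
  | ridl {n : ℕ} {s : ETm S} : Rw (.comp (.eid n) s) s
  -- ↑ ∘ (t.s) → s
  | rshcons {n : ℕ} {t s : ETm S} : Rw (.comp (.up n) (.cons t s)) s
  -- (s₁ ∘ s₂) ∘ s₃ → s₁ ∘ (s₂ ∘ s₃)
  | rassoc {s₁ s₂ s₃ : ETm S} : Rw (.comp (.comp s₁ s₂) s₃) (.comp s₁ (.comp s₂ s₃))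
  -- (t.s) ∘ s' → t[s'].(s ∘ s')
  | rmap {t s s' : ETm S} : Rw (.comp (.cons t s) s') (.cons (.sub t s') (.comp s s'))
  -- s ∘ id → s
  | ridr {n : ℕ} {s : ETm S} : Rw (.comp s (.eid n)) s
  -- 1.↑ → id
  | rvarsh {n : ℕ} : Rw (.cons (.idx 1 (n + 1)) (.up n)) (.eid (n + 1))
  -- 1[s].(↑ ∘ s) → s
  | rscons {m n : ℕ} {s : ETm S} : Rw (.cons (.sub (.idx 1 m) s) (.comp (.up n) s)) s
  -- fₚ(t₁,…,tₙ)[s] → f_q(t₁[1.1[↑].….1[↑^{k₁−1}].s∘↑^{k₁}], …) for s of sort ⟨q,p⟩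
  | rfa {f : S.Fn} {p q : ℕ} {a : Fin (S.far f).length → ETm S} {s : ETm S} :
      (∃ Θ, HasSort Θ s (.sb q p)) →
      Rw (.sub (.fa f p a) s)
         (.fa f q (fun i => .sub (a i) (liftSub S q ((S.far f).get i) s)))
  -- congruence: rewriting in subterms
  | cfa {f : S.Fn} {p : ℕ} {a : Fin (S.far f).length → ETm S}
      {i : Fin (S.far f).length} {t' : ETm S} :
      Rw (a i) t' → Rw (.fa f p a) (.fa f p (Function.update a i t'))
  | csub₁ {t t' s : ETm S} : Rw t t' → Rw (.sub t s) (.sub t' s)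
  | csub₂ {t s s' : ETm S} : Rw s s' → Rw (.sub t s) (.sub t s')
  | ccons₁ {t t' s : ETm S} : Rw t t' → Rw (.cons t s) (.cons t' s)
  | ccons₂ {t s s' : ETm S} : Rw s s' → Rw (.cons t s) (.cons t s')
  | ccomp₁ {t t' s : ETm S} : Rw t t' → Rw (.comp t s) (.comp t' s)
  | ccomp₂ {t s s' : ETm S} : Rw s s' → Rw (.comp t s) (.comp t s')

/-- The congruence `≡` on terms of `L'` generated by the rewrite system `σ`. -/
def TmConv (S : BSig) : ETm S → ETm S → Prop := Relation.EqvGen Rw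

/-- A term is `σ`-normal if no rewrite step applies to it. -/
def ENormal (t : ETm S) : Prop := ∀ u, ¬ Rw t u

/-- Propositions of `L'` (quantifiers bind one variable of the indicated sort,
represented by formula-level de Bruijn indices `qvar`). -/
inductive EFm (S : BSig) : Type
  | atom : (P : S.Pr) → (Fin (S.par P).length → ETm S) → EFm S
  | imp : EFm S → EFm S → EFm S
  | conj : EFm S → EFm S → EFm S
  | disj : EFm S → EFm S → EFm S
  | bot : EFm S
  | all : Srt → EFm S → EFm S
  | ex : Srt → EFm S → EFm S

/-- Replacement of the quantifier-bound variable `k` by a term (in a term of `L'`). -/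
def ETm.openE (u : ETm S) (k : ℕ) : ETm S → ETm S
  | .qvar i => if i = k then u else .qvar i
  | .evar x s => .evar x s
  | .idx i n => .idx i n
  | .fa f p a => .fa f p (fun j => ETm.openE u k (a j))
  | .sub t s => .sub (ETm.openE u k t) (ETm.openE u k s)
  | .eid n => .eid n
  | .cons t s => .cons (ETm.openE u k t) (ETm.openE u k s)
  | .up n => .up n
  | .comp t s => .comp (ETm.openE u k t) (ETm.openE u k s)

/-- Instantiation of the quantifier-bound variable `k` of a proposition of `L'`. -/
def EFm.openF (u : ETm S) : ℕ → EFm S → EFm S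
  | k, .atom P a => .atom P (fun i => ETm.openE u k (a i))
  | k, .imp A B => .imp (EFm.openF u k A) (EFm.openF u k B)
  | k, .conj A B => .conj (EFm.openF u k A) (EFm.openF u k B)
  | k, .disj A B => .disj (EFm.openF u k A) (EFm.openF u k B)
  | _, .bot => .bot
  | k, .all s A => .all s (EFm.openF u (k + 1) A)
  | k, .ex s A => .ex s (EFm.openF u (k + 1) A)

/-- Names of the free named variables of a term of `L'`. -/
def ETm.fvs : ETm S → Set ℕ
  | .evar x _ => {x}
  | .qvar _ => ∅
  | .idx _ _ => ∅
  | .fa _ _ a => ⋃ i, (a i).fvs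
  | .sub t s => t.fvs ∪ s.fvs
  | .eid _ => ∅
  | .cons t s => t.fvs ∪ s.fvs
  | .up _ => ∅
  | .comp t s => t.fvs ∪ s.fvs

/-- Names of the free named variables of a proposition of `L'`. -/
def EFm.fvs : EFm S → Set ℕ
  | .atom _ a => ⋃ i, (a i).fvs
  | .imp A B => A.fvs ∪ B.fvs
  | .conj A B => A.fvs ∪ B.fvs
  | .disj A B => A.fvs ∪ B.fvs
  | .bot => ∅
  | .all _ A => A.fvs
  | .ex _ A => A.fvs

/-- Free variables of a multiset of `L'`-propositions. -/
def mFvE (Γ : Multiset (EFm S)) : Set ℕ := {x | ∃ A ∈ Γ, x ∈ A.fvs}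

/-- The congruence on propositions of `L'` generated by `σ`
(congruent atoms have `≡`-congruent arguments). -/
inductive FConv : EFm S → EFm S → Prop
  | atom {P : S.Pr} {a b : Fin (S.par P).length → ETm S} :
      (∀ i, TmConv S (a i) (b i)) → FConv (.atom P a) (.atom P b)
  | imp {A A' B B'} : FConv A A' → FConv B B' → FConv (.imp A B) (.imp A' B')
  | conj {A A' B B'} : FConv A A' → FConv B B' → FConv (.conj A B) (.conj A' B')
  | disj {A A' B B'} : FConv A A' → FConv B B' → FConv (.disj A B) (.disj A' B')
  | bot : FConv .bot .bot
  | all {s A A'} : FConv A A' → FConv (.all s A) (.all s A')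
  | ex {s A A'} : FConv A A' → FConv (.ex s A) (.ex s A')

/-- Sequent calculus modulo a congruence `E`, with proof length recorded:
the standard classical rules, where principal formulas need only be congruent
to the displayed shape.  `DerivM E n Γ Δ` : `Γ ⊢ Δ` has a proof of length `n`. -/
inductive DerivM (E : EFm S → EFm S → Prop) : ℕ → Multiset (EFm S) → Multiset (EFm S) → Prop
  | ax {A B : EFm S} : E A B → DerivM E 1 {A} {B}
  | cut {m n Γ Δ} {A B : EFm S} : E A B →
      DerivM E m (A ::ₘ Γ) Δ → DerivM E n Γ (B ::ₘ Δ) → DerivM E (m + n + 1) Γ Δ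
  | contrL {m Γ Δ} {A B₁ B₂ : EFm S} : E A B₁ → E A B₂ →
      DerivM E m (B₁ ::ₘ B₂ ::ₘ Γ) Δ → DerivM E (m + 1) (A ::ₘ Γ) Δ
  | contrR {m Γ Δ} {A B₁ B₂ : EFm S} : E A B₁ → E A B₂ →
      DerivM E m Γ (B₁ ::ₘ B₂ ::ₘ Δ) → DerivM E (m + 1) Γ (A ::ₘ Δ)
  | weakL {m Γ Δ} {A : EFm S} : DerivM E m Γ Δ → DerivM E (m + 1) (A ::ₘ Γ) Δ
  | weakR {m Γ Δ} {A : EFm S} : DerivM E m Γ Δ → DerivM E (m + 1) Γ (A ::ₘ Δ)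
  | impL {m n Γ Δ} {C A B : EFm S} : E C (.imp A B) →
      DerivM E m Γ (A ::ₘ Δ) → DerivM E n (B ::ₘ Γ) Δ → DerivM E (m + n + 1) (C ::ₘ Γ) Δ
  | impR {m Γ Δ} {C A B : EFm S} : E C (.imp A B) →
      DerivM E m (A ::ₘ Γ) (B ::ₘ Δ) → DerivM E (m + 1) Γ (C ::ₘ Δ)
  | conjL {m Γ Δ} {C A B : EFm S} : E C (.conj A B) →
      DerivM E m (A ::ₘ B ::ₘ Γ) Δ → DerivM E (m + 1) (C ::ₘ Γ) Δ
  | conjR {m n Γ Δ} {C A B : EFm S} : E C (.conj A B) →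
      DerivM E m Γ (A ::ₘ Δ) → DerivM E n Γ (B ::ₘ Δ) → DerivM E (m + n + 1) Γ (C ::ₘ Δ)
  | disjL {m n Γ Δ} {C A B : EFm S} : E C (.disj A B) →
      DerivM E m (A ::ₘ Γ) Δ → DerivM E n (B ::ₘ Γ) Δ → DerivM E (m + n + 1) (C ::ₘ Γ) Δ
  | disjR {m Γ Δ} {C A B : EFm S} : E C (.disj A B) →
      DerivM E m Γ (A ::ₘ B ::ₘ Δ) → DerivM E (m + 1) Γ (C ::ₘ Δ)
  | botL {Γ Δ} {A : EFm S} : E A .bot → DerivM E 1 (A ::ₘ Γ) Δ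
  | allL {m Γ Δ} {B C A : EFm S} {s : Srt} {t : ETm S} :
      E B (.all s A) → E C (EFm.openF t 0 A) → HasSort [] t s →
      DerivM E m (C ::ₘ Γ) Δ → DerivM E (m + 1) (B ::ₘ Γ) Δ
  | allR {m Γ Δ} {B A : EFm S} {s : Srt} {x : ℕ} :
      E B (.all s A) → x ∉ mFvE Γ → x ∉ mFvE Δ → x ∉ A.fvs →
      DerivM E m Γ ((EFm.openF (.evar x s) 0 A) ::ₘ Δ) → DerivM E (m + 1) Γ (B ::ₘ Δ)
  | exL {m Γ Δ} {B A : EFm S} {s : Srt} {x : ℕ} :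
      E B (.ex s A) → x ∉ mFvE Γ → x ∉ mFvE Δ → x ∉ A.fvs →
      DerivM E m ((EFm.openF (.evar x s) 0 A) ::ₘ Γ) Δ → DerivM E (m + 1) (B ::ₘ Γ) Δ
  | exR {m Γ Δ} {B C A : EFm S} {s : Srt} {t : ETm S} :
      E B (.ex s A) → E C (EFm.openF t 0 A) → HasSort [] t s →
      DerivM E m Γ (C ::ₘ Δ) → DerivM E (m + 1) Γ (B ::ₘ Δ)

/-- Provability in sequent calculus modulo the congruence `E`. -/
def DerivMod (E : EFm S → EFm S → Prop) (Γ Δ : Multiset (EFm S)) : Prop :=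
  ∃ n, DerivM E n Γ Δ

/- ## Pre-cooking : the translation from L to L' -/

/-- Pre-cooking of a term at binder depth `p` (the length of the list `l` of
bound variables): binder-bound variables become de Bruijn constants, other
variables are protected by the shift `↑^p`. -/
def Ft (S : BSig) : (p : ℕ) → Tm S → ETm S
  | p, .bvar i =>
      if i < p then .idx (i + 1) p
      else if p = 0 then .qvar (i - p) else .sub (.qvar (i - p)) (upChain S 0 p)
  | p, .fvar x =>
      if p = 0 then .evar x (.tm 0) else .sub (.evar x (.tm 0)) (upChain S 0 p)
  | p, .app f a => .fa f p (fun i => Ft S (p + (S.far f).get i) (a i))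

/-- Pre-cooking of a proposition: `A' = F(A, ε)`. -/
def Ff (S : BSig) : Fm S → EFm S
  | .atom P a => .atom P (fun i => Ft S ((S.par P).get i) (a i))
  | .imp A B => .imp (Ff S A) (Ff S B)
  | .conj A B => .conj (Ff S A) (Ff S B)
  | .disj A B => .disj (Ff S A) (Ff S B)
  | .bot => .bot
  | .all A => .all (.tm 0) (Ff S A)
  | .ex A => .ex (.tm 0) (Ff S A)

/-- Grafting `⟨v/x⟩t` in `L'`: textual replacement of the (sort-0) variable `x` by `v`. -/
def ETm.graft (x : ℕ) (v : ETm S) : ETm S → ETm S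
  | .evar y s => if y = x ∧ s = .tm 0 then v else .evar y s
  | .qvar i => .qvar i
  | .idx i n => .idx i n
  | .fa f p a => .fa f p (fun j => ETm.graft x v (a j))
  | .sub t s => .sub (ETm.graft x v t) (ETm.graft x v s)
  | .eid n => .eid n
  | .cons t s => .cons (ETm.graft x v t) (ETm.graft x v s)
  | .up n => .up n
  | .comp t s => .comp (ETm.graft x v t) (ETm.graft x v s)

/-- Substitution `(v/x)A` of a (quantifier-closed) term for a variable in a
proposition of `L'` (capture-avoiding, since terms of `L'` have no binders). -/
def EFm.graft (x : ℕ) (v : ETm S) : EFm S → EFm S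
  | .atom P a => .atom P (fun i => ETm.graft x v (a i))
  | .imp A B => .imp (EFm.graft x v A) (EFm.graft x v B)
  | .conj A B => .conj (EFm.graft x v A) (EFm.graft x v B)
  | .disj A B => .disj (EFm.graft x v A) (EFm.graft x v B)
  | .bot => .bot
  | .all s A => .all s (EFm.graft x v A)
  | .ex s A => .ex s (EFm.graft x v A)

/- ## F-terms and F-propositions -/

/-- All named variables occurring in the term have sort `0`. -/
def ETm.vars0 : ETm S → Prop
  | .evar _ s => s = .tm 0
  | .qvar _ => True
  | .idx _ _ => True
  | .fa _ _ a => ∀ i, (a i).vars0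
  | .sub t s => t.vars0 ∧ s.vars0
  | .eid _ => True
  | .cons t s => t.vars0 ∧ s.vars0
  | .up _ => True
  | .comp t s => t.vars0 ∧ s.vars0

/-- All named variables of the proposition have sort `0`, and all its
quantifiers bind variables of sort `0`. -/
def EFm.vars0F : EFm S → Prop
  | .atom _ a => ∀ i, (a i).vars0
  | .imp A B => A.vars0F ∧ B.vars0F
  | .conj A B => A.vars0F ∧ B.vars0F
  | .disj A B => A.vars0F ∧ B.vars0F
  | .bot => True
  | .all s A => s = .tm 0 ∧ A.vars0F
  | .ex s A => s = .tm 0 ∧ A.vars0F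

/-- The proposition is `σ`-normal: every term occurring in it is `σ`-normal. -/
def EFm.TmsNormal : EFm S → Prop
  | .atom _ a => ∀ i, ENormal (a i)
  | .imp A B => A.TmsNormal ∧ B.TmsNormal
  | .conj A B => A.TmsNormal ∧ B.TmsNormal
  | .disj A B => A.TmsNormal ∧ B.TmsNormal
  | .bot => True
  | .all _ A => A.TmsNormal
  | .ex _ A => A.TmsNormal

/-- Well-sortedness of a proposition of `L'` in a context `Θ` of quantified sorts. -/
def EFmSorted : List Srt → EFm S → Prop
  | Θ, .atom P a => ∀ i, HasSort Θ (a i) (.tm ((S.par P).get i))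
  | Θ, .imp A B => EFmSorted Θ A ∧ EFmSorted Θ B
  | Θ, .conj A B => EFmSorted Θ A ∧ EFmSorted Θ B
  | Θ, .disj A B => EFmSorted Θ A ∧ EFmSorted Θ B
  | _, .bot => True
  | Θ, .all s A => EFmSorted (s :: Θ) A
  | Θ, .ex s A => EFmSorted (s :: Θ) A

/-- An F-proposition: a `σ`-normal, well-sorted proposition of `L'` containing
only variables of sort `0`. -/
def FProp (A : EFm S) : Prop := A.TmsNormal ∧ A.vars0F ∧ EFmSorted [] A

/-- An F-term of sort `0`: a `σ`-normal, well-sorted term of sort `0` of `L'`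
containing only variables of sort `0`. -/
def FTerm0 (t : ETm S) : Prop := ENormal t ∧ t.vars0 ∧ HasSort [] t (.tm 0)

/-! Pre-cooking and both substitutions commute with the connectives and with function
symbols, so everything comes down to an occurrence of `x` under `p` binders. There
`x' = x[↑^p]` is grafted to `t'[↑^p]`, whereas `(t/x)A` puts `t` in place and pre-cooking
yields `F(t, l)` with `|l| = p`. The shift lemma `t'[↑^p] ≡ F(t, l)` is proved by induction
on `t` after generalising `↑^p` to any substitution that behaves like its `k`-fold lift
`1.….k.(↑^p ∘ ↑^k)`: the rule for `fₚ(…)[s]` turns such a substitution into one of the same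
kind under the binders of `f`. -/

local notation:50 a " ≡σ " b => TmConv _ a b

namespace TmConv

theorem refl (t : ETm S) : t ≡σ t := Relation.EqvGen.refl t

theorem symm {a b : ETm S} (h : a ≡σ b) : b ≡σ a := Relation.EqvGen.symm a b h

theorem trans {a b c : ETm S} (h₁ : a ≡σ b) (h₂ : b ≡σ c) : a ≡σ c :=
  Relation.EqvGen.trans a b c h₁ h₂

theorem of_rw {a b : ETm S} (h : Rw a b) : a ≡σ b := Relation.EqvGen.rel a b h

instance : Trans (TmConv S) (TmConv S) (TmConv S) := ⟨trans⟩

theorem map {F : ETm S → ETm S} (hF : ∀ a b, Rw a b → Rw (F a) (F b)) {a b : ETm S}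
    (h : a ≡σ b) : F a ≡σ F b := by
  induction h with
  | rel _ _ r => exact of_rw (hF _ _ r)
  | refl => exact refl _
  | symm _ _ _ ih => exact ih.symm
  | trans _ _ _ _ _ ih₁ ih₂ => exact ih₁.trans ih₂

theorem sub_left {t t' : ETm S} (s : ETm S) (h : t ≡σ t') : .sub t s ≡σ .sub t' s :=
  map (fun _ _ => Rw.csub₁) h

theorem sub_right (t : ETm S) {s s' : ETm S} (h : s ≡σ s') : .sub t s ≡σ .sub t s' :=
  map (fun _ _ => Rw.csub₂) h

theorem comp_left {s₁ s₁' : ETm S} (s₂ : ETm S) (h : s₁ ≡σ s₁') : .comp s₁ s₂ ≡σ .comp s₁' s₂ :=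
  map (fun _ _ => Rw.ccomp₁) h

theorem comp_right (s₁ : ETm S) {s₂ s₂' : ETm S} (h : s₂ ≡σ s₂') :
    .comp s₁ s₂ ≡σ .comp s₁ s₂' :=
  map (fun _ _ => Rw.ccomp₂) h

theorem fa_update {f : S.Fn} {p : ℕ} (a : Fin (S.far f).length → ETm S)
    (i : Fin (S.far f).length) {c c' : ETm S} (h : c ≡σ c') :
    .fa f p (Function.update a i c) ≡σ .fa f p (Function.update a i c') :=
  map (F := fun c => .fa f p (Function.update a i c))
    (fun c c' r => by
      simpa using Rw.cfa (p := p) (a := Function.update a i c) (i := i) (t' := c') (by simpa using r))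
    h

theorem fa {f : S.Fn} {p : ℕ} {a b : Fin (S.far f).length → ETm S} (h : ∀ i, a i ≡σ b i) :
    .fa f p a ≡σ .fa f p b := by
  classical
  suffices ∀ s : Finset (Fin (S.far f).length), .fa f p a ≡σ .fa f p (s.piecewise b a) by
    simpa using this Finset.univ
  intro s
  induction s using Finset.induction_on with
  | empty => simpa using refl _
  | insert j s hj ih =>
    rw [Finset.piecewise_insert]
    refine ih.trans ?_
    conv_lhs => rw [← Function.update_eq_self j (s.piecewise b a)]
    exact fa_update _ j (by simpa [Finset.piecewise_eq_of_notMem _ _ _ hj] using h j)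

end TmConv

open TmConv

theorem upChain_hasSort (Θ : List Srt) (m i : ℕ) :
    HasSort Θ (upChain S m i) (.sb (m + i) m) := by
  fun_induction upChain S m i with
  | case1 => exact .eid
  | case2 => exact .up
  | case3 m k ih => exact .comp .up (by simpa [Nat.add_assoc, Nat.add_comm 1] using ih)

theorem upChain_succ_conv (m i : ℕ) :
    upChain S m (i + 1) ≡σ .comp (.up m) (upChain S (m + 1) i) := by
  rcases i with _ | i
  · exact (of_rw Rw.ridr).symm
  · exact TmConv.refl _

theorem upChain_add_conv (m a b : ℕ) :
    upChain S m (a + b) ≡σ .comp (upChain S m a) (upChain S (m + a) b) := by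
  induction a generalizing m with
  | zero => simpa [upChain] using (of_rw (Rw.ridl (n := m))).symm
  | succ a ih =>
    calc upChain S m (a + 1 + b) = upChain S m (a + b + 1) := by rw [Nat.add_right_comm]
      _ ≡σ .comp (.up m) (upChain S (m + 1) (a + b)) := upChain_succ_conv m _
      _ ≡σ .comp (.up m) (.comp (upChain S (m + 1) a) (upChain S (m + 1 + a) b)) :=
        comp_right _ (ih _)
      _ ≡σ .comp (.comp (.up m) (upChain S (m + 1) a)) (upChain S (m + 1 + a) b) :=
        (of_rw Rw.rassoc).symm
      _ ≡σ .comp (upChain S m (a + 1)) (upChain S (m + (a + 1)) b) := by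
        rw [Nat.add_assoc, Nat.add_comm 1 a]
        exact comp_left _ (upChain_succ_conv m a).symm

theorem idx_conv_sub_upChain {i n : ℕ} (h : i < n) :
    .idx (i + 1) n ≡σ .sub (.idx 1 (n - i)) (upChain S (n - i) i) := by
  rcases i with _ | i
  · exact (of_rw Rw.rtid).symm
  · exact of_rw (Rw.ridx (by omega) (by omega))

theorem idx_add_conv {a n : ℕ} (j : ℕ) (ha : 1 ≤ a) (han : a ≤ n) :
    .idx (a + j) (n + j) ≡σ .sub (.idx a n) (upChain S n j) := by
  obtain ⟨b, rfl⟩ : ∃ b, a = b + 1 := ⟨a - 1, by omega⟩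
  obtain ⟨c, rfl⟩ : ∃ c, n = c + b := ⟨n - b, by omega⟩
  calc .idx (b + 1 + j) (c + b + j) = .idx (b + j + 1) (c + b + j) := by rw [Nat.add_right_comm]
    _ ≡σ .sub (.idx 1 c) (upChain S c (b + j)) := by
      simpa [show c + b + j - (b + j) = c by omega] using
        idx_conv_sub_upChain (S := S) (i := b + j) (n := c + b + j) (by omega)
    _ ≡σ .sub (.idx 1 c) (.comp (upChain S c b) (upChain S (c + b) j)) :=
      sub_right _ (upChain_add_conv c b j)
    _ ≡σ .sub (.sub (.idx 1 c) (upChain S c b)) (upChain S (c + b) j) := (of_rw Rw.rclos).symm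
    _ ≡σ .sub (.idx (b + 1) (c + b)) (upChain S (c + b) j) := by
      refine sub_left _ ?_
      simpa using (idx_conv_sub_upChain (S := S) (i := b) (n := c + b) (by omega)).symm

theorem shiftOne_conv {q k l : ℕ} (h : l < q + k) :
    shiftOne S q k l ≡σ .idx (l + 1) (q + k) := by
  unfold shiftOne
  split_ifs with hl
  · subst hl
    exact TmConv.refl _
  · exact (idx_conv_sub_upChain h).symm

theorem shiftOne_hasSort (Θ : List Srt) {q k l : ℕ} (h : l < q + k) :
    HasSort Θ (shiftOne S q k l) (.tm (q + k)) := by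
  unfold shiftOne
  split_ifs with hl
  · exact .idx (by omega) (by omega)
  · have hu := upChain_hasSort (S := S) Θ (q + k - l) l
    rw [show q + k - l + l = q + k by omega] at hu
    exact .sub (.idx (by omega) (by omega)) hu

section liftSub

variable {q j : ℕ} {s : ETm S}

theorem liftAux_hasSort {Θ : List Srt} {k : ℕ} (hs : HasSort Θ s (.sb q k)) (m : ℕ) :
    ∀ l, m + l = j → HasSort Θ (liftAux S q j s m l) (.sb (q + j) (k + m)) := by
  induction m with
  | zero => exact fun _ _ => .comp hs (upChain_hasSort Θ q j)
  | succ m ih =>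
    intro l hml
    exact .cons (shiftOne_hasSort Θ (by omega)) (ih (l + 1) (by omega))

theorem liftSub_hasSort {Θ : List Srt} {k : ℕ} (hs : HasSort Θ s (.sb q k)) (j : ℕ) :
    HasSort Θ (liftSub S q j s) (.sb (q + j) (k + j)) := by
  rcases j with _ | j
  · exact hs
  · exact liftAux_hasSort hs (j + 1) 0 rfl

/-- `↑^i` drops the first `i` components of the cons-list `liftAux`. -/
theorem upChain_comp_liftAux_conv (m i r l : ℕ) :
    .comp (upChain S m i) (liftAux S q j s (i + r) l) ≡σ liftAux S q j s r (l + i) := by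
  induction i generalizing m r l with
  | zero => simpa [upChain] using of_rw (Rw.ridl (n := m))
  | succ i ih =>
    calc .comp (upChain S m (i + 1)) (liftAux S q j s (i + 1 + r) l)
        ≡σ .comp (.comp (.up m) (upChain S (m + 1) i)) (liftAux S q j s (i + (r + 1)) l) := by
          rw [Nat.add_right_comm, Nat.add_assoc]
          exact comp_left _ (upChain_succ_conv m i)
      _ ≡σ .comp (.up m) (.comp (upChain S (m + 1) i) (liftAux S q j s (i + (r + 1)) l)) :=
          of_rw Rw.rassoc
      _ ≡σ .comp (.up m) (liftAux S q j s (r + 1) (l + i)) := comp_right _ (ih _ _ _)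
      _ ≡σ liftAux S q j s r (l + (i + 1)) := of_rw Rw.rshcons

theorem upChain_comp_liftSub_conv (m : ℕ) :
    .comp (upChain S m j) (liftSub S q j s) ≡σ .comp s (upChain S q j) := by
  rcases j with _ | j
  · exact (of_rw Rw.ridl).trans (of_rw Rw.ridr).symm
  · simpa [liftSub, liftAux] using
      upChain_comp_liftAux_conv (S := S) (q := q) (j := j + 1) (s := s) m (j + 1) 0 0

theorem idx_sub_liftSub_conv_of_lt {k b : ℕ} (hb : b < j) :
    .sub (.idx (b + 1) (k + j)) (liftSub S q j s) ≡σ .idx (b + 1) (q + j) := by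
  obtain ⟨r, rfl⟩ : ∃ r, j = b + r + 1 := ⟨j - b - 1, by omega⟩
  set L := liftAux S q (b + r + 1) s (b + (r + 1)) 0
  set n := k + (b + r + 1) - b
  calc .sub (.idx (b + 1) (k + (b + r + 1))) (liftSub S q (b + r + 1) s)
      ≡σ .sub (.sub (.idx 1 n) (upChain S n b)) L := sub_left _ (idx_conv_sub_upChain (by omega))
    _ ≡σ .sub (.idx 1 n) (.comp (upChain S n b) L) := of_rw Rw.rclos
    _ ≡σ .sub (.idx 1 n) (liftAux S q (b + r + 1) s (r + 1) b) := by
      simpa using sub_right _ (upChain_comp_liftAux_conv n b (r + 1) 0)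
    _ ≡σ shiftOne S q (b + r + 1) b := by rw [liftAux]; exact of_rw Rw.rhead
    _ ≡σ .idx (b + 1) (q + (b + r + 1)) := shiftOne_conv (by omega)

end liftSub

/-- `IsShiftLift p k s`: the substitution `s` behaves like the `k`-fold lift
`1.….k.(↑^p ∘ ↑^k)` of the shift `↑^p`. -/
structure IsShiftLift (p k : ℕ) (s : ETm S) : Prop where
  hasSort : ∃ Θ, HasSort Θ s (.sb (p + k) k)
  idx_sub : ∀ b < k, .sub (.idx (b + 1) k) s ≡σ .idx (b + 1) (p + k)
  upChain_comp : .comp (upChain S 0 k) s ≡σ upChain S 0 (p + k)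

theorem isShiftLift_upChain (p : ℕ) : IsShiftLift p 0 (upChain S 0 p) where
  hasSort := ⟨[], by simpa using upChain_hasSort (S := S) [] 0 p⟩
  idx_sub := by omega
  upChain_comp := of_rw Rw.ridl

namespace IsShiftLift

variable {p k : ℕ} {s : ETm S}

theorem idx_sub_liftSub_conv_of_le (h : IsShiftLift p k s) {j b : ℕ} (hjb : j ≤ b)
    (hbk : b < k + j) :
    .sub (.idx (b + 1) (k + j)) (liftSub S (p + k) j s) ≡σ .idx (b + 1) (p + k + j) := by
  obtain ⟨c, rfl⟩ : ∃ c, b = c + j := ⟨b - j, by omega⟩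
  rw [Nat.add_right_comm c j 1]
  calc .sub (.idx (c + 1 + j) (k + j)) (liftSub S (p + k) j s)
      ≡σ .sub (.sub (.idx (c + 1) k) (upChain S k j)) (liftSub S (p + k) j s) :=
        sub_left _ (idx_add_conv j (by omega) (by omega))
    _ ≡σ .sub (.idx (c + 1) k) (.comp (upChain S k j) (liftSub S (p + k) j s)) :=
        of_rw Rw.rclos
    _ ≡σ .sub (.idx (c + 1) k) (.comp s (upChain S (p + k) j)) :=
        sub_right _ (upChain_comp_liftSub_conv k)
    _ ≡σ .sub (.sub (.idx (c + 1) k) s) (upChain S (p + k) j) := (of_rw Rw.rclos).symm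
    _ ≡σ .sub (.idx (c + 1) (p + k)) (upChain S (p + k) j) :=
        sub_left _ (h.idx_sub c (by omega))
    _ ≡σ .idx (c + 1 + j) (p + k + j) := (idx_add_conv j (by omega) (by omega)).symm

theorem upChain_comp_liftSub_conv (h : IsShiftLift p k s) (j : ℕ) :
    .comp (upChain S 0 (k + j)) (liftSub S (p + k) j s) ≡σ upChain S 0 (p + k + j) :=
  calc .comp (upChain S 0 (k + j)) (liftSub S (p + k) j s)
      ≡σ .comp (.comp (upChain S 0 k) (upChain S k j)) (liftSub S (p + k) j s) := by
        simpa using comp_left _ (upChain_add_conv (S := S) 0 k j)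
    _ ≡σ .comp (upChain S 0 k) (.comp (upChain S k j) (liftSub S (p + k) j s)) :=
        of_rw Rw.rassoc
    _ ≡σ .comp (upChain S 0 k) (.comp s (upChain S (p + k) j)) :=
        comp_right _ (_root_.upChain_comp_liftSub_conv k)
    _ ≡σ .comp (.comp (upChain S 0 k) s) (upChain S (p + k) j) := (of_rw Rw.rassoc).symm
    _ ≡σ .comp (upChain S 0 (p + k)) (upChain S (p + k) j) := comp_left _ h.upChain_comp
    _ ≡σ upChain S 0 (p + k + j) := by simpa using (upChain_add_conv (S := S) 0 (p + k) j).symm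

theorem liftSub (h : IsShiftLift p k s) (j : ℕ) :
    IsShiftLift p (k + j) (liftSub S (p + k) j s) := by
  obtain ⟨Θ, hs⟩ := h.hasSort
  refine ⟨⟨Θ, ?_⟩, fun b hb => ?_, ?_⟩ <;> rw [← Nat.add_assoc]
  · exact liftSub_hasSort hs j
  · rcases lt_or_ge b j with hbj | hjb
    · exact idx_sub_liftSub_conv_of_lt hbj
    · exact h.idx_sub_liftSub_conv_of_le hjb hb
  · exact h.upChain_comp_liftSub_conv j

end IsShiftLift

theorem Ft_fvar_conv (k y : ℕ) : Ft S k (.fvar y) ≡σ .sub (.evar y (.tm 0)) (upChain S 0 k) := by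
  rcases k with _ | k
  · exact (of_rw Rw.rtid).symm
  · exact TmConv.refl _

theorem IsShiftLift.sub_Ft_conv {p k : ℕ} {s : ETm S} {t : Tm S} (h : IsShiftLift p k s)
    (ht : Tm.WF k t) : .sub (Ft S k t) s ≡σ Ft S (p + k) t := by
  induction t generalizing k s with
  | bvar i =>
    have hi : i < k := ht
    simpa [Ft, hi, show i < p + k by omega] using h.idx_sub i hi
  | fvar y =>
    calc .sub (Ft S k (.fvar y)) s
        ≡σ .sub (.sub (.evar y (.tm 0)) (upChain S 0 k)) s := sub_left _ (Ft_fvar_conv k y)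
      _ ≡σ .sub (.evar y (.tm 0)) (.comp (upChain S 0 k) s) := of_rw Rw.rclos
      _ ≡σ .sub (.evar y (.tm 0)) (upChain S 0 (p + k)) := sub_right _ h.upChain_comp
      _ ≡σ Ft S (p + k) (.fvar y) := (Ft_fvar_conv _ y).symm
  | app f a ih =>
    refine (of_rw (Rw.rfa h.hasSort)).trans (fa fun i => ?_)
    simpa [Nat.add_assoc] using ih i (h.liftSub _) (ht i)

theorem ETm.graft_upChain (x : ℕ) (v : ETm S) (m i : ℕ) :
    ETm.graft x v (upChain S m i) = upChain S m i := by
  fun_induction upChain S m i <;> simp_all [ETm.graft]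

theorem ETm.graft_Ft_of_notMem {x : ℕ} (v : ETm S) {u : Tm S} (hx : x ∉ u.fv) (p : ℕ) :
    ETm.graft x v (Ft S p u) = Ft S p u := by
  induction u generalizing p with
  | bvar i => simp only [Ft]; split_ifs <;> simp [ETm.graft, graft_upChain]
  | fvar y =>
    have hy : y ≠ x := by simpa [Tm.fv, eq_comm] using hx
    simp only [Ft]; split_ifs <;> simp [ETm.graft, graft_upChain, hy]
  | app f a ih =>
    simp only [Tm.fv, Set.mem_iUnion, not_exists] at hx
    simp [Ft, ETm.graft, ih _ (hx _)]

theorem ETm.graft_Ft_fvar_conv (x : ℕ) (v : ETm S) (p : ℕ) :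
    .sub v (upChain S 0 p) ≡σ ETm.graft x v (Ft S p (.fvar x)) := by
  rcases p with _ | p
  · simpa [Ft, ETm.graft, upChain] using of_rw Rw.rtid
  · simpa [Ft, ETm.graft, graft_upChain] using TmConv.refl _

theorem Ft_subst_conv (x : ℕ) {t : Tm S} (ht : Tm.WF 0 t) (u : Tm S) (p : ℕ) :
    Ft S p (Tm.subst x t u) ≡σ ETm.graft x (Ft S 0 t) (Ft S p u) := by
  induction u generalizing p with
  | bvar i => rw [ETm.graft_Ft_of_notMem _ (by simp [Tm.fv])]; exact TmConv.refl _
  | fvar y =>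
    by_cases hy : y = x
    · subst hy
      simpa [Tm.subst] using
        ((isShiftLift_upChain p).sub_Ft_conv ht).symm.trans (ETm.graft_Ft_fvar_conv y _ p)
    · rw [ETm.graft_Ft_of_notMem _ (by simpa [Tm.fv, eq_comm] using hy)]
      simpa [Tm.subst, hy] using TmConv.refl _
  | app f a ih => exact fa fun i => ih i _

theorem precooking_subst_prop_general (S : BSig) (t : Tm S) (A : Fm S) (x : ℕ)
    (ht : Tm.WF 0 t) :
    FConv (Ff S (Fm.subst x t A)) (EFm.graft x (Ft S 0 t) (Ff S A)) := by
  induction A with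
  | atom P a => exact .atom fun i => Ft_subst_conv x ht (a i) _
  | imp _ _ ihA ihB => exact .imp ihA ihB
  | conj _ _ ihA ihB => exact .conj ihA ihB
  | disj _ _ ihA ihB => exact .disj ihA ihB
  | bot => exact .bot
  | all _ ih => exact .all ih
  | ex _ ih => exact .ex ih

/-- **Substitution and pre-cooking on propositions** (Proposition `substprop`):
for every term `t` and proposition `A` of `L` and every variable `x`,
`((t/x)A)' ≡ (t'/x)A'` modulo the congruence generated by `σ`. -/
theorem precooking_subst_prop (S : BSig) (t : Tm S) (A : Fm S) (x : ℕ)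
    (ht : Tm.WF 0 t) (hA : Fm.WF 0 A) :
    FConv (Ff S (Fm.subst x t A)) (EFm.graft x (Ft S 0 t) (Ff S A)) :=
  precooking_subst_prop_general S t A x ht
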